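/- Define F(x) := E[Z/(1+f^{−1}(x)·Z)] for x ≥ 0, where Z is standard exponential and f^{−1} is the inverse of f(x) = E[log(1+xZ)]/E[Z/(1+xZ)] − x. Then F is continuous, strictly decreasing on [0,∞), with F(0) = 1 and 0 < F(x) < 1 for all x > 0. -/

import Mathlib

/-! `F = ratioMean ∘ f⁻¹`, where `ratioMean t = E[Z/(1+tZ)]` is continuous and strictly
decreasing on `[0, ∞)` with `ratioMean 0 = E[Z] = 1`. Since `log (1 + u) ≥ u / (1 + u)`,
`f ≥ 0 = f 0`; being continuous and injective on `[0, ∞)`, `f` is then strictly increasing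
there, hence so is `f⁻¹`, which maps `[0, ∞)` onto `[0, ∞)` and is therefore continuous. -/

open MeasureTheory Set Filter

/-- f(x) = E[log(1+xZ)]/E[Z/(1+xZ)] − x for Z standard exponential. -/
noncomputable def waterfill (x : ℝ) : ℝ :=
  (∫ z in Ioi (0:ℝ), Real.log (1 + x * z) * Real.exp (-z)) /
    (∫ z in Ioi (0:ℝ), (z / (1 + x * z)) * Real.exp (-z)) - x

theorem ContinuousOn.strictMonoOn_Ici_of_injOn {α δ : Type*} [ConditionallyCompleteLinearOrder α]
    [TopologicalSpace α] [OrderTopology α] [DenselyOrdered α] [LinearOrder δ] [TopologicalSpace δ]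
    [OrderClosedTopology δ] {f : α → δ} {a : α} (hf : ContinuousOn f (Ici a))
    (hinj : InjOn f (Ici a)) (hle : ∀ x ∈ Ici a, f a ≤ f x) : StrictMonoOn f (Ici a) :=
  fun _ hx y hy hxy =>
    (hf.mono Icc_subset_Ici_self).strictMonoOn_of_injOn_Icc hy (hle y hy)
      (hinj.mono Icc_subset_Ici_self) ⟨hx, hxy.le⟩ ⟨hy, le_rfl⟩ hxy

theorem StrictMonoOn.continuousOn_Ici_of_image_eq {α β : Type*} [LinearOrder α]
    [TopologicalSpace α] [OrderTopology α] [LinearOrder β] [TopologicalSpace β] [OrderTopology β]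
    [DenselyOrdered β] {g : α → β} {a : α} (hg : StrictMonoOn g (Ici a))
    (himg : g '' Ici a = Ici (g a)) : ContinuousOn g (Ici a) := by
  intro x hx
  rcases (mem_Ici.mp hx).eq_or_lt with rfl | hax
  · exact hg.continuousWithinAt_right_of_image_mem_nhdsWithin self_mem_nhdsWithin
      (himg ▸ self_mem_nhdsWithin)
  · refine (hg.continuousAt_of_image_mem_nhds (Ici_mem_nhds hax) ?_).continuousWithinAt
    rw [himg]
    exact Ici_mem_nhds (hg self_mem_Ici hx hax)

theorem MeasureTheory.setIntegral_lt_setIntegral_of_forall_lt {X : Type*} [MeasurableSpace X]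
    {μ : Measure X} {s : Set X} {f g : X → ℝ} (hs : MeasurableSet s) (hμs : μ s ≠ 0)
    (hf : IntegrableOn f s μ) (hg : IntegrableOn g s μ) (hlt : ∀ x ∈ s, f x < g x) :
    ∫ x in s, f x ∂μ < ∫ x in s, g x ∂μ := by
  have hpos : 0 < ∫ x in s, (g - f) x ∂μ := by
    rw [setIntegral_pos_iff_support_of_nonneg_ae ?_ (hg.sub hf)]
    · have hsupp : s ⊆ Function.support (g - f) ∩ s :=
        fun x hx => ⟨(sub_pos.mpr (hlt x hx)).ne', hx⟩
      exact (pos_iff_ne_zero.mpr hμs).trans_le (measure_mono hsupp)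
    · filter_upwards [ae_restrict_mem hs] with x hx using (sub_pos.mpr (hlt x hx)).le
  simpa only [Pi.sub_apply, integral_sub hg hf, sub_pos] using hpos

namespace Waterfill

open Real

noncomputable def ratioMean (t : ℝ) : ℝ := ∫ z in Ioi (0:ℝ), z / (1 + t * z) * exp (-z)

noncomputable def logMean (t : ℝ) : ℝ := ∫ z in Ioi (0:ℝ), log (1 + t * z) * exp (-z)

theorem waterfill_eq (t : ℝ) : waterfill t = logMean t / ratioMean t - t := rfl

theorem integrableOn_mul_exp_neg : IntegrableOn (fun z : ℝ => z * exp (-z)) (Ioi 0) := by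
  simpa [mul_comm, show (2:ℝ) - 1 = 1 by norm_num] using
    GammaIntegral_convergent (s := 2) (by norm_num)

theorem integral_mul_exp_neg : ∫ z in Ioi (0:ℝ), z * exp (-z) = 1 := by
  simpa [show (2:ℝ) - 1 = 1 by norm_num] using
    integral_rpow_mul_exp_neg_mul_Ioi (a := 2) (r := 1) (by norm_num) (by norm_num)

theorem norm_div_one_add_mul_mul_exp_neg_le {t z : ℝ} (ht : 0 ≤ t) (hz : 0 ≤ z) :
    ‖z / (1 + t * z) * exp (-z)‖ ≤ z * exp (-z) := by
  rw [norm_of_nonneg (by positivity)]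
  gcongr
  exact div_le_self hz (by nlinarith [mul_nonneg ht hz])

theorem norm_log_one_add_mul_mul_exp_neg_le {t z : ℝ} (ht : 0 ≤ t) (hz : 0 ≤ z) :
    ‖log (1 + t * z) * exp (-z)‖ ≤ t * (z * exp (-z)) := by
  have hlog := log_le_sub_one_of_pos (by positivity : 0 < 1 + t * z)
  rw [norm_of_nonneg (mul_nonneg (log_nonneg (by nlinarith [mul_nonneg ht hz])) (exp_nonneg _))]
  nlinarith [exp_pos (-z)]

theorem integrableOn_div_one_add_mul_mul_exp_neg {t : ℝ} (ht : 0 ≤ t) :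
    IntegrableOn (fun z => z / (1 + t * z) * exp (-z)) (Ioi 0) :=
  integrableOn_mul_exp_neg.mono' (by fun_prop) <| (ae_restrict_mem measurableSet_Ioi).mono
    fun _ hz => norm_div_one_add_mul_mul_exp_neg_le ht (mem_Ioi.mp hz).le

theorem integrableOn_log_one_add_mul_mul_exp_neg {t : ℝ} (ht : 0 ≤ t) :
    IntegrableOn (fun z => log (1 + t * z) * exp (-z)) (Ioi 0) :=
  (integrableOn_mul_exp_neg.const_mul t).mono' (by fun_prop) <|
    (ae_restrict_mem measurableSet_Ioi).mono
      fun _ hz => norm_log_one_add_mul_mul_exp_neg_le ht (mem_Ioi.mp hz).le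

theorem ratioMean_zero : ratioMean 0 = 1 := by
  simpa [ratioMean] using integral_mul_exp_neg

theorem ratioMean_strictAntiOn : StrictAntiOn ratioMean (Ici 0) := by
  intro s hs t ht hst
  refine setIntegral_lt_setIntegral_of_forall_lt measurableSet_Ioi (by simp)
    (integrableOn_div_one_add_mul_mul_exp_neg ht) (integrableOn_div_one_add_mul_mul_exp_neg hs)
    fun z (hz : 0 < z) => ?_
  have := mem_Ici.mp hs
  gcongr

theorem ratioMean_pos {t : ℝ} (ht : 0 ≤ t) : 0 < ratioMean t := by
  simpa [ratioMean] using setIntegral_lt_setIntegral_of_forall_lt measurableSet_Ioi (by simp)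
    integrableOn_zero (integrableOn_div_one_add_mul_mul_exp_neg ht)
    fun z (hz : 0 < z) => by positivity

theorem continuousOn_ratioMean : ContinuousOn ratioMean (Ici 0) := by
  refine continuousOn_of_dominated (fun _ _ => by fun_prop) (fun t ht => ?_)
    integrableOn_mul_exp_neg ?_
  · exact (ae_restrict_mem measurableSet_Ioi).mono
      fun _ hz => norm_div_one_add_mul_mul_exp_neg_le ht (mem_Ioi.mp hz).le
  · refine (ae_restrict_mem measurableSet_Ioi).mono fun z (hz : 0 < z) => ?_
    exact (continuousOn_const.div (by fun_prop) fun t (ht : 0 ≤ t) => by positivity).mul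
      continuousOn_const

theorem continuousOn_logMean : ContinuousOn logMean (Ici 0) := by
  refine continuousOn_of_locally_continuousOn fun b _ => ⟨Iio (b + 1), isOpen_Iio, by simp, ?_⟩
  refine continuousOn_of_dominated (fun _ _ => by fun_prop) (fun t ht => ?_)
    (integrableOn_mul_exp_neg.const_mul (b + 1)) ?_
  · refine (ae_restrict_mem measurableSet_Ioi).mono fun z (hz : 0 < z) => ?_
    refine (norm_log_one_add_mul_mul_exp_neg_le ht.1 hz.le).trans ?_
    gcongr
    exact ht.2.le
  · refine (ae_restrict_mem measurableSet_Ioi).mono fun z (hz : 0 < z) => ?_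
    refine (ContinuousOn.log (by fun_prop) fun t ht => ?_).mul continuousOn_const
    exact (show 0 < 1 + t * z by nlinarith [mem_Ici.mp ht.1]).ne'

theorem mul_ratioMean_le_logMean {t : ℝ} (ht : 0 ≤ t) : t * ratioMean t ≤ logMean t := by
  rw [ratioMean, ← integral_const_mul]
  refine setIntegral_mono_on ((integrableOn_div_one_add_mul_mul_exp_neg ht).const_mul t)
    (integrableOn_log_one_add_mul_mul_exp_neg ht) measurableSet_Ioi fun z (hz : 0 < z) => ?_
  have hpos : 0 < 1 + t * z := by positivity
  calc t * (z / (1 + t * z) * exp (-z)) = (1 - (1 + t * z)⁻¹) * exp (-z) := by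
        field_simp
        ring
    _ ≤ log (1 + t * z) * exp (-z) := by gcongr; exact one_sub_inv_le_log_of_pos hpos

theorem waterfill_nonneg {t : ℝ} (ht : 0 ≤ t) : 0 ≤ waterfill t := by
  rw [waterfill_eq, sub_nonneg, le_div_iff₀ (ratioMean_pos ht)]
  exact mul_ratioMean_le_logMean ht

theorem waterfill_zero : waterfill 0 = 0 := by
  simp [waterfill]

theorem continuousOn_waterfill : ContinuousOn waterfill (Ici 0) :=
  (continuousOn_logMean.div continuousOn_ratioMean fun _ ht => (ratioMean_pos ht).ne').sub
    continuousOn_id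

end Waterfill

open Waterfill in
theorem F_strictAnti (finv : ℝ → ℝ)
    (hmem : ∀ y ∈ Ici (0:ℝ), finv y ∈ Ici (0:ℝ))
    (hleft : ∀ x ∈ Ici (0:ℝ), finv (waterfill x) = x)
    (hright : ∀ y ∈ Ici (0:ℝ), waterfill (finv y) = y) :
    ContinuousOn
      (fun x : ℝ => ∫ z in Ioi (0:ℝ), (z / (1 + finv x * z)) * Real.exp (-z)) (Ici 0) ∧
    StrictAntiOn
      (fun x : ℝ => ∫ z in Ioi (0:ℝ), (z / (1 + finv x * z)) * Real.exp (-z)) (Ici 0) ∧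
    (∫ z in Ioi (0:ℝ), (z / (1 + finv 0 * z)) * Real.exp (-z)) = 1 ∧
    ∀ x : ℝ, 0 < x →
      0 < (∫ z in Ioi (0:ℝ), (z / (1 + finv x * z)) * Real.exp (-z)) ∧
      (∫ z in Ioi (0:ℝ), (z / (1 + finv x * z)) * Real.exp (-z)) < 1 := by
  have hf : StrictMonoOn waterfill (Ici 0) :=
    continuousOn_waterfill.strictMonoOn_Ici_of_injOn
      (fun a ha b hb h => by rw [← hleft a ha, ← hleft b hb, h])
      fun _ hx => by rw [waterfill_zero]; exact waterfill_nonneg hx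
  have hfinv_zero : finv 0 = 0 :=
    hf.injOn (hmem 0 self_mem_Ici) self_mem_Ici (by rw [hright 0 self_mem_Ici, waterfill_zero])
  have hfinv : StrictMonoOn finv (Ici 0) := fun x hx y hy hxy =>
    (hf.lt_iff_lt (hmem x hx) (hmem y hy)).mp (by rwa [hright x hx, hright y hy])
  have himage : finv '' Ici 0 = Ici (finv 0) := by
    rw [hfinv_zero]
    exact (image_subset_iff.mpr hmem).antisymm
      fun x hx => ⟨waterfill x, waterfill_nonneg hx, hleft x hx⟩
  have hF : StrictAntiOn (ratioMean ∘ finv) (Ici 0) :=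
    ratioMean_strictAntiOn.comp_strictMonoOn hfinv hmem
  have hF_zero : ratioMean (finv 0) = 1 := by rw [hfinv_zero, ratioMean_zero]
  refine ⟨continuousOn_ratioMean.comp (hfinv.continuousOn_Ici_of_image_eq himage) hmem, hF,
    hF_zero, fun x hx => ⟨ratioMean_pos (hmem x hx.le), ?_⟩⟩
  exact (hF self_mem_Ici hx.le hx).trans_eq hF_zero
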